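/- arXiv:2601.09390 — 5 statements merged into one kernel-verified Lean document; each statement's English description precedes it below -/
import Mathlib

section
/- For w = 6, the set S = {u ∈ (Z/3)^5 : Σ_{i=1}^{5} α^{u_i} = 1} consists exactly of all permutations of the vectors (0,a,a,b,b) for a,b ∈ {0,1,2}. -/
open Finset

abbrev F4 := GaloisField 2 2

noncomputable def toF4 : ZMod 2 →+* F4 := ZMod.castHom dvd_rfl F4

def dotp {m : ℕ} (i j : Fin m → ZMod 3) : ZMod 3 := ∑ l, i l * j l

noncomputable def dft {m : ℕ} (α : F4) (f : (Fin m → ZMod 3) → ZMod 2)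
    (j : Fin m → ZMod 3) : F4 :=
  ∑ i : Fin m → ZMod 3, toF4 (f i) * α ^ (dotp i j).val

noncomputable def code (m : ℕ) (α : F4) (W : Set ℕ) :
    Set ((Fin m → ZMod 3) → ZMod 2) :=
  {f | ∀ j : Fin m → ZMod 3, hammingNorm j ∉ W → dft α f j = 0}

set_option maxRecDepth 10000 in
lemma mono_case : ∀ w : Fin 5 → ZMod 3, Monotone (fun i => (w i).val) →
    (#{i ∈ univ | w i = 0} % 2 = 1 ∧ #{i ∈ univ | w i = 1} % 2 = 0 ∧
      #{i ∈ univ | w i = 2} % 2 = 0) →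
    ∃ a b : ZMod 3, w = ![0, a, a, b, b] := by decide

/-- for `w = 6`, `S` consists of all permutations of `(0,a,a,b,b)`. -/
theorem stmt_3 (α : F4) (hα : α ^ 2 = α + 1) :
    {u : Fin 5 → ZMod 3 | ∑ i, α ^ (u i).val = 1}
      = {u | ∃ (a b : ZMod 3) (σ : Equiv.Perm (Fin 5)), u = ![0, a, a, b, b] ∘ σ} := by
  have h2 : (2 : F4) = 0 := by exact_mod_cast CharP.cast_eq_zero F4 2
  have expand : ∀ {M : Type} [AddCommMonoid M] (g : ZMod 3 → M),
      ∑ v : ZMod 3, g v = g 0 + g 1 + g 2 := by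
    intro M _ g
    have huniv : (univ : Finset (ZMod 3)) = {0, 1, 2} := by decide
    rw [huniv, Finset.sum_insert (by decide), Finset.sum_insert (by decide),
      Finset.sum_singleton, add_assoc]
  ext u
  simp only [Set.mem_setOf_eq]
  constructor
  · intro hu
    have hfib : ∀ v : ZMod 3, ∑ i ∈ univ.filter (fun i => u i = v), α ^ (u i).val
        = #{i ∈ univ | u i = v} • α ^ v.val := by
      intro v
      rw [← Finset.sum_const]
      exact Finset.sum_congr rfl (fun i hi => by rw [(Finset.mem_filter.mp hi).2])
    have hsum : (#{i ∈ univ | u i = 0} : F4) + (#{i ∈ univ | u i = 1} : F4) * α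
        + (#{i ∈ univ | u i = 2} : F4) * α ^ 2 = 1 := by
      have h1 : ∑ v : ZMod 3, #{i ∈ univ | u i = v} • α ^ v.val = 1 := by
        rw [← hu, ← Finset.sum_fiberwise univ u (fun i => α ^ (u i).val)]
        exact Finset.sum_congr rfl fun v _ => (hfib v).symm
      rw [expand] at h1
      simp only [nsmul_eq_mul] at h1
      have hv0 : (0 : ZMod 3).val = 0 := rfl
      have hv1 : (1 : ZMod 3).val = 1 := rfl
      have hv2 : (2 : ZMod 3).val = 2 := rfl
      rw [hv0, hv1, hv2, pow_zero, pow_one, mul_one] at h1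
      exact h1
    have hcard : #{i ∈ univ | u i = 0} + #{i ∈ univ | u i = 1}
        + #{i ∈ univ | u i = 2} = 5 := by
      have h := Finset.card_eq_sum_card_fiberwise (s := (univ : Finset (Fin 5)))
        (t := (univ : Finset (ZMod 3))) (f := u) (fun x _ => mem_univ (u x))
      rw [expand (fun v => #{i ∈ univ | u i = v})] at h
      simpa using h.symm
    set n0 := #{i ∈ univ | u i = 0} with hn0
    set n1 := #{i ∈ univ | u i = 1} with hn1
    set n2 := #{i ∈ univ | u i = 2} with hn2
    have hpar : ∀ n : ℕ, ((n : F4)) = ((n % 2 : ℕ) : F4) := by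
      intro n
      conv_lhs => rw [← Nat.div_add_mod n 2]
      push_cast
      rw [h2]
      ring
    rw [hpar n0, hpar n1, hpar n2] at hsum
    rcases Nat.mod_two_eq_zero_or_one n0 with e0 | e0 <;>
      rcases Nat.mod_two_eq_zero_or_one n1 with e1 | e1 <;>
        rcases Nat.mod_two_eq_zero_or_one n2 with e2 | e2 <;>
          rw [e0, e1, e2] at hsum <;> push_cast at hsum
    · omega
    · exact absurd (by linear_combination (α - 1) * hsum - α * hα : (1 : F4) = 0) one_ne_zero
    · exact absurd (by linear_combination α * hsum - hα : (1 : F4) = 0) one_ne_zero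
    · omega
    · -- the good case: n0 odd, n1 even, n2 even
      set σ := Tuple.sort (fun i => (u i).val) with hσ
      have hmono : Monotone (fun i => ((u ∘ σ) i).val) :=
        Tuple.monotone_sort (fun i => (u i).val)
      have hcount : ∀ v : ZMod 3, #{i ∈ univ | (u ∘ σ) i = v} = #{i ∈ univ | u i = v} := by
        intro v
        have hmap : ({i ∈ univ | u i = v} : Finset (Fin 5))
            = ({i ∈ (univ : Finset (Fin 5)) | (u ∘ σ) i = v}).map σ.toEmbedding := by
          ext j
          simp only [mem_filter, mem_univ, true_and, Finset.mem_map_equiv,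
            Function.comp_apply, Equiv.apply_symm_apply]
        rw [hmap, Finset.card_map]
      obtain ⟨a, b, hab⟩ := mono_case (u ∘ σ) hmono
        ⟨by rw [hcount 0, ← hn0, e0], by rw [hcount 1, ← hn1, e1],
          by rw [hcount 2, ← hn2, e2]⟩
      refine ⟨a, b, σ⁻¹, funext fun i => ?_⟩
      have h := congrFun hab (σ⁻¹ i)
      simpa using h
    · omega
    · omega
    · exact absurd (by linear_combination hsum - hα - α * h2 : (1 : F4) = 0) one_ne_zero
  · rintro ⟨a, b, σ, rfl⟩
    simp only [Function.comp_apply]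
    rw [Equiv.sum_comp σ (fun i => α ^ ((![0, a, a, b, b] : Fin 5 → ZMod 3) i).val),
      Fin.sum_univ_five]
    simp only [Matrix.cons_val_zero, Matrix.cons_val_one, Matrix.head_cons,
      Matrix.cons_val_two, Matrix.tail_cons, Matrix.cons_val_three, Matrix.cons_val_four]
    have hv0 : (0 : ZMod 3).val = 0 := rfl
    rw [hv0, pow_zero]
    linear_combination (α ^ a.val + α ^ b.val) * h2
end

section
/- The dual code of the abelian code A(m,W) (with respect to the standard inner product on F_2^{3^m}) is A(m, W̄), where W̄ = {0,1,...,m} \ W. -/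
open Finset

/- ### auxiliary lemmas -/

noncomputable instance instFintypeF4 : Fintype F4 := Fintype.ofFinite F4

lemma F4_two : (2 : F4) = 0 := by
  have h := CharP.cast_eq_zero F4 2
  exact_mod_cast h

lemma F4_card : Fintype.card F4 = 4 := by
  have h := GaloisField.card 2 2 (by norm_num)
  rw [Nat.card_eq_fintype_card] at h
  simpa using h

lemma F4_pow4 (u : F4) : u ^ 4 = u := by
  conv_rhs => rw [← FiniteField.pow_card u]
  rw [F4_card]

lemma trace_exists (u : F4) : ∃ b : ZMod 2, toF4 b = u + u ^ 2 := by
  by_cases h : u + u ^ 2 = 0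
  · exact ⟨0, by simp [h]⟩
  · refine ⟨1, ?_⟩
    have hsq : (u + u ^ 2) ^ 2 = u + u ^ 2 := by
      linear_combination F4_pow4 u + u ^ 3 * F4_two
    have hz : (u + u ^ 2) * ((u + u ^ 2) - 1) = 0 := by linear_combination hsq
    rcases mul_eq_zero.mp hz with h1 | h1
    · exact absurd h1 h
    · have h2 : u + u ^ 2 = 1 := by linear_combination h1
      simp [h2]

section Dotp

variable {m : ℕ}

lemma dotp_add_left (i k j : Fin m → ZMod 3) :
    dotp (i + k) j = dotp i j + dotp k j := by
  simp [dotp, add_mul, Finset.sum_add_distrib]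

lemma dotp_add_right (i j k : Fin m → ZMod 3) :
    dotp i (j + k) = dotp i j + dotp i k := by
  simp [dotp, mul_add, Finset.sum_add_distrib]

lemma dotp_comm (i j : Fin m → ZMod 3) : dotp i j = dotp j i := by
  simp [dotp, mul_comm]

lemma dotp_neg_left (i j : Fin m → ZMod 3) : dotp (-i) j = -dotp i j := by
  simp [dotp]

lemma dotp_single (v : Fin m → ZMod 3) (l : Fin m) :
    dotp v (Pi.single l 1) = v l := by
  rw [dotp, Finset.sum_eq_single l]
  · simp
  · intro b _ hb; simp [Pi.single_apply, hb]
  · simp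

end Dotp

section Alpha

set_option maxHeartbeats 1000000

variable {m : ℕ} (α : F4) (hα : α ^ 2 = α + 1)

include hα

lemma alpha_cube : α ^ 3 = 1 := by
  linear_combination (α + 1) * hα + α * F4_two

lemma alpha_ne_one : α ≠ 1 := by
  intro h
  rw [h] at hα
  have h1 : (1 : F4) = 0 := by linear_combination -hα
  exact one_ne_zero h1

lemma alpha_sq_ne_one : α ^ 2 ≠ 1 := by
  intro h
  rw [hα] at h
  have h0 : α = 0 := by linear_combination h
  rw [h0] at hα
  exact absurd hα (by simp)

lemma pow_val_mod (n : ℕ) : α ^ n = α ^ (n % 3) := by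
  conv_lhs => rw [← Nat.div_add_mod n 3]
  rw [pow_add, pow_mul, alpha_cube α hα, one_pow, one_mul]

lemma chi_add (x y : ZMod 3) : α ^ (x + y).val = α ^ x.val * α ^ y.val := by
  rw [ZMod.val_add, ← pow_val_mod α hα, pow_add]

lemma chi_neg (x : ZMod 3) : α ^ (-x).val = (α ^ x.val) ^ 2 := by
  have h2 : -x = x + x := by
    have h3 : ∀ y : ZMod 3, -y = y + y := by decide
    exact h3 x
  rw [h2, chi_add α hα, sq]

lemma sum_char (v : Fin m → ZMod 3) :
    ∑ j : Fin m → ZMod 3, α ^ (dotp v j).val = if v = 0 then 1 else 0 := by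
  split_ifs with h
  · subst h
    have hz : ∀ j : Fin m → ZMod 3, dotp (0 : Fin m → ZMod 3) j = 0 := by
      intro j; simp [dotp]
    simp only [hz, ZMod.val_zero, pow_zero, Finset.sum_const, Finset.card_univ,
      nsmul_eq_mul, mul_one]
    rw [Fintype.card_pi]
    simp only [ZMod.card, Finset.prod_const, Finset.card_univ, Fintype.card_fin]
    push_cast
    have h3 : (3 : F4) = 1 := by linear_combination F4_two
    rw [h3, one_pow]
  · obtain ⟨l, hl⟩ := Function.ne_iff.mp h
    set S := ∑ j : Fin m → ZMod 3, α ^ (dotp v j).val with hS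
    have key : S = α ^ (v l).val * S := by
      have step := Fintype.sum_equiv (Equiv.addRight (Pi.single l 1 : Fin m → ZMod 3))
        (fun j => α ^ (dotp v (j + Pi.single l 1)).val)
        (fun j => α ^ (dotp v j).val) (fun j => by simp)
      calc S = ∑ j : Fin m → ZMod 3, α ^ (dotp v (j + Pi.single l 1)).val := step.symm
      _ = ∑ j : Fin m → ZMod 3, α ^ (v l).val * α ^ (dotp v j).val := by
          refine Finset.sum_congr rfl fun j _ => ?_
          rw [dotp_add_right, chi_add α hα, dotp_single, mul_comm]
      _ = α ^ (v l).val * S := by rw [← Finset.mul_sum]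
    have hvl : (v l).val = 1 ∨ (v l).val = 2 := by
      have h0 : (v l).val ≠ 0 := by simpa [ZMod.val_eq_zero] using hl
      have h3 : (v l).val < 3 := ZMod.val_lt _
      omega
    have hc1 : α ^ (v l).val ≠ 1 := by
      rcases hvl with h1 | h1 <;> rw [h1]
      · simpa using alpha_ne_one α hα
      · exact alpha_sq_ne_one α hα
    have hz : (α ^ (v l).val - 1) * S = 0 := by linear_combination -key
    rcases mul_eq_zero.mp hz with h1 | h1
    · exact absurd (by linear_combination h1) hc1
    · exact h1

lemma parseval (g f : (Fin m → ZMod 3) → ZMod 2) :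
    ∑ j : Fin m → ZMod 3, dft α g j * dft α f (-j) = toF4 (∑ i, g i * f i) := by
  have expand : ∀ j : Fin m → ZMod 3, dft α g j * dft α f (-j)
      = ∑ i : Fin m → ZMod 3, ∑ k : Fin m → ZMod 3,
          toF4 (g i) * toF4 (f k) * α ^ (dotp (i - k) j).val := by
    intro j
    rw [dft, dft, Finset.sum_mul_sum]
    refine Finset.sum_congr rfl fun i _ => Finset.sum_congr rfl fun k _ => ?_
    have hd : dotp (i - k) j = dotp i j + dotp k (-j) := by
      have h1 : dotp k (-j) = -dotp k j := by simp [dotp]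
      have h2 : i - k = i + -k := by ring
      rw [h1, h2, dotp_add_left, dotp_neg_left]
    rw [hd, chi_add α hα]
    ring
  rw [Finset.sum_congr rfl fun j _ => expand j]
  rw [Finset.sum_comm]
  have inner : ∀ i : Fin m → ZMod 3,
      (∑ j : Fin m → ZMod 3, ∑ k : Fin m → ZMod 3,
        toF4 (g i) * toF4 (f k) * α ^ (dotp (i - k) j).val) = toF4 (g i * f i) := by
    intro i
    rw [Finset.sum_comm]
    have hk : ∀ k : Fin m → ZMod 3,
        (∑ j : Fin m → ZMod 3, toF4 (g i) * toF4 (f k) * α ^ (dotp (i - k) j).val)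
          = if k = i then toF4 (g i) * toF4 (f k) else 0 := by
      intro k
      rw [← Finset.mul_sum, sum_char α hα]
      by_cases h : k = i
      · simp [h]
      · have h2 : i - k ≠ 0 := sub_ne_zero.mpr (Ne.symm h)
        simp [h2, h]
    rw [Finset.sum_congr rfl fun k _ => hk k, Finset.sum_ite_eq' Finset.univ i]
    simp [map_mul]
  rw [Finset.sum_congr rfl fun i _ => inner i, map_sum]

lemma construct (β : F4) (j0 : Fin m → ZMod 3) :
    ∃ f : (Fin m → ZMod 3) → ZMod 2, ∀ j : Fin m → ZMod 3, dft α f j =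
      (if j = -j0 then β else 0) + (if j = j0 then β ^ 2 else 0) := by
  choose f hf using fun i : Fin m → ZMod 3 =>
    trace_exists (β * α ^ (dotp i j0).val)
  refine ⟨f, fun j => ?_⟩
  have hterm : ∀ i : Fin m → ZMod 3, toF4 (f i) * α ^ (dotp i j).val
      = β * α ^ (dotp (j0 + j) i).val + β ^ 2 * α ^ (dotp (-j0 + j) i).val := by
    intro i
    rw [hf i]
    have e1 : α ^ (dotp (j0 + j) i).val = α ^ (dotp i j0).val * α ^ (dotp i j).val := by
      rw [dotp_add_left, chi_add α hα, dotp_comm j0 i, dotp_comm j i]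
    have e2 : α ^ (dotp (-j0 + j) i).val
        = (α ^ (dotp i j0).val) ^ 2 * α ^ (dotp i j).val := by
      rw [dotp_add_left, chi_add α hα, dotp_neg_left, dotp_comm j0 i, dotp_comm j i,
        chi_neg α hα]
    rw [e1, e2]
    ring
  rw [dft, Finset.sum_congr rfl fun i _ => hterm i, Finset.sum_add_distrib,
    ← Finset.mul_sum, ← Finset.mul_sum, sum_char α hα, sum_char α hα]
  have c1 : (j0 + j = 0) ↔ (j = -j0) :=
    ⟨fun h => by linear_combination h, fun h => by rw [h]; ring⟩
  have c2 : (-j0 + j = 0) ↔ (j = j0) :=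
    ⟨fun h => by linear_combination h, fun h => by rw [h]; ring⟩
  simp only [c1, c2]
  split_ifs <;> ring

end Alpha

lemma hnorm_le {m : ℕ} (j : Fin m → ZMod 3) : hammingNorm j ≤ m := by
  simpa using (hammingNorm_le_card_fintype (x := j))

lemma hnorm_neg {m : ℕ} (j : Fin m → ZMod 3) : hammingNorm (-j) = hammingNorm j :=
  hammingNorm_comp (fun _ (c : ZMod 3) => -c) (fun _ => neg_injective) (fun _ => neg_zero)

set_option maxHeartbeats 1000000 in
/-- the dual code of `A(m,W)` is `A(m, {0,…,m} \\ W)`. -/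
theorem stmt_11 (m : ℕ) (α : F4) (hα : α ^ 2 = α + 1) (W : Set ℕ) :
    {g : (Fin m → ZMod 3) → ZMod 2 | ∀ f ∈ code m α W, ∑ i, g i * f i = 0}
      = code m α {n | n ≤ m ∧ n ∉ W} := by
  have hinj : Function.Injective toF4 := toF4.injective
  ext g
  simp only [Set.mem_setOf_eq, code]
  constructor
  · intro hg j0 hj0
    have hw : hammingNorm j0 ∈ W := by
      by_contra hw
      exact hj0 ⟨hnorm_le j0, hw⟩
    have key : ∀ β : F4, β * dft α g j0 + β ^ 2 * dft α g (-j0) = 0 := by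
      intro β
      obtain ⟨f, hf⟩ := construct α hα β j0
      have hmem : f ∈ code m α W := by
        intro j hj
        rw [hf j]
        have h1 : j ≠ -j0 := by
          intro h; rw [h, hnorm_neg] at hj; exact hj hw
        have h2 : j ≠ j0 := by
          intro h; rw [h] at hj; exact hj hw
        simp [h1, h2]
      have h0 : ∑ i, g i * f i = 0 := hg f hmem
      have hp := parseval α hα g f
      rw [h0, map_zero] at hp
      have hsum : ∑ j : Fin m → ZMod 3, dft α g j * dft α f (-j)
          = β * dft α g j0 + β ^ 2 * dft α g (-j0) := by
        have hterm : ∀ j : Fin m → ZMod 3, dft α g j * dft α f (-j)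
            = (if j = j0 then β * dft α g j else 0)
              + (if j = -j0 then β ^ 2 * dft α g j else 0) := by
          intro j
          rw [hf (-j)]
          have r1 : (-j = -j0) ↔ (j = j0) := neg_inj
          have r2 : (-j = j0) ↔ (j = -j0) := neg_eq_iff_eq_neg
          simp only [r1, r2]
          split_ifs <;> ring
        rw [Finset.sum_congr rfl fun j _ => hterm j, Finset.sum_add_distrib]
        simp only [Finset.sum_ite_eq', Finset.mem_univ, if_true]
      rw [hsum] at hp
      exact hp
    have e1 := key 1
    have e2 := key α
    simp only [one_pow, one_mul] at e1
    linear_combination α ^ 2 * e1 - e2 - (dft α g j0) * hα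
  · intro hg f hf
    have hsum : ∑ j : Fin m → ZMod 3, dft α g j * dft α f (-j) = 0 := by
      refine Finset.sum_eq_zero fun j _ => ?_
      by_cases h : hammingNorm j ∈ W
      · have hgj : dft α g j = 0 := hg j (by simp [h])
        rw [hgj, zero_mul]
      · have hfj : dft α f (-j) = 0 := hf (-j) (by rwa [hnorm_neg])
        rw [hfj, mul_zero]
    have hp := parseval α hα g f
    rw [hsum] at hp
    have h0 := hp.symm
    rw [← map_zero toF4] at h0
    exact hinj h0
end

section
/- The code BiD(m,2,2)^⊥ = A(m, {0,...,m}\{2}) contains no nonzero codeword of Hamming weight 1, 2, 3, or 4 for any m ≥ 3; hence its minimum distance is at least 5. -/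
open Finset

/-! ### Auxiliary: coordinates of powers of `α` over the basis `{1, α}` -/

def c0 (a : ZMod 3) : ZMod 2 := if a = 1 then 0 else 1
def c1 (a : ZMod 3) : ZMod 2 := if a = 0 then 0 else 1

lemma zmod2_eq_one : ∀ z : ZMod 2, z ≠ 0 → z = 1 := by decide

lemma pow_val (α : F4) (hα : α ^ 2 = α + 1) (a : ZMod 3) :
    α ^ a.val = toF4 (c0 a) + toF4 (c1 a) * α := by
  rcases (show ∀ b : ZMod 3, b = 0 ∨ b = 1 ∨ b = 2 from by decide) a with h | h | h <;> subst h
  · have e0 : c0 0 = 1 := by decide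
    have e1 : c1 0 = 0 := by decide
    have ev : (0 : ZMod 3).val = 0 := rfl
    rw [e0, e1, ev]; simp
  · have e0 : c0 1 = 0 := by decide
    have e1 : c1 1 = 1 := by decide
    have ev : (1 : ZMod 3).val = 1 := rfl
    rw [e0, e1, ev]; simp
  · have e0 : c0 2 = 1 := by decide
    have e1 : c1 2 = 1 := by decide
    have ev : (2 : ZMod 3).val = 2 := rfl
    rw [e0, e1, ev, hα]; simp [add_comm]

lemma indep (α : F4) (hα : α ^ 2 = α + 1) (x y : ZMod 2)
    (h : toF4 x + toF4 y * α = 0) : x = 0 ∧ y = 0 := by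
  have hα0 : α ≠ 0 := by
    intro h0
    rw [h0] at hα
    simp only [ne_eq, zero_pow, OfNat.ofNat_ne_zero, not_false_eq_true, zero_add] at hα
    exact zero_ne_one hα
  rcases (show ∀ z : ZMod 2, z = 0 ∨ z = 1 from by decide) x with hx | hx <;>
    rcases (show ∀ z : ZMod 2, z = 0 ∨ z = 1 from by decide) y with hy | hy <;>
      subst hx <;> subst hy
  · exact ⟨rfl, rfl⟩
  · simp only [map_zero, map_one, one_mul, zero_add] at h
    exact absurd h hα0
  · simp only [map_zero, map_one, zero_mul, add_zero] at h
    exact absurd h one_ne_zero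
  · simp only [map_one, one_mul] at h
    have h1 : (1 : F4) = 0 := by linear_combination hα + (2 - α) * h
    exact absurd h1 one_ne_zero

lemma sums_zero {ι : Type*} (α : F4) (hα : α ^ 2 = α + 1) (T : Finset ι)
    (g : ι → ZMod 3) (h : ∑ i ∈ T, α ^ (g i).val = 0) :
    (∑ i ∈ T, c0 (g i)) = 0 ∧ (∑ i ∈ T, c1 (g i)) = 0 := by
  have hh : ∑ i ∈ T, α ^ (g i).val
      = toF4 (∑ i ∈ T, c0 (g i)) + toF4 (∑ i ∈ T, c1 (g i)) * α := by
    rw [map_sum, map_sum, Finset.sum_mul, ← Finset.sum_add_distrib]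
    exact Finset.sum_congr rfl fun i _ => pow_val α hα (g i)
  rw [hh] at h
  exact indep α hα _ _ h

/-! ### Decidable combinatorial core -/

lemma case1 : ∀ A : ZMod 3, ¬(c0 A = 0 ∧ c1 A = 0) := by decide

lemma eq2 : ∀ A B : ZMod 3, c0 A + c0 B = 0 → c1 A + c1 B = 0 → A = B := by decide

lemma sub2 : ∀ aK aL bK bL : ZMod 3,
    aK * 1 + aL * 1 = bK * 1 + bL * 1 → aK * 1 + aL * 2 = bK * 1 + bL * 2 → aK = bK := by decide

def T3 (q r : ZMod 3) : Prop :=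
  c0 0 + (c0 q + c0 r) = 0 ∧ c1 0 + (c1 q + c1 r) = 0

instance (q r : ZMod 3) : Decidable (T3 q r) := by unfold T3; infer_instance

lemma trans3 : ∀ A B C : ZMod 3,
    c0 A + (c0 B + c0 C) = 0 → c1 A + (c1 B + c1 C) = 0 → T3 (B - A) (C - A) := by decide

set_option synthInstance.maxSize 2000 in
set_option synthInstance.maxHeartbeats 1000000 in
set_option maxHeartbeats 4000000 in
lemma key3 : ∀ q1 r1 q2 r2 q3 r3 : ZMod 3,
    T3 (q1 * 1 + q2 * 1) (r1 * 1 + r2 * 1) → T3 (q1 * 1 + q2 * 2) (r1 * 1 + r2 * 2) →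
    T3 (q1 * 1 + q3 * 1) (r1 * 1 + r3 * 1) → T3 (q1 * 1 + q3 * 2) (r1 * 1 + r3 * 2) →
    T3 (q2 * 1 + q3 * 1) (r2 * 1 + r3 * 1) → T3 (q2 * 1 + q3 * 2) (r2 * 1 + r3 * 2) →
    False := by decide

def T4 (p q r : ZMod 3) : Prop :=
  c0 0 + (c0 p + (c0 q + c0 r)) = 0 ∧ c1 0 + (c1 p + (c1 q + c1 r)) = 0

instance (p q r : ZMod 3) : Decidable (T4 p q r) := by unfold T4; infer_instance

lemma trans4 : ∀ A B C D : ZMod 3,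
    c0 A + (c0 B + (c0 C + c0 D)) = 0 → c1 A + (c1 B + (c1 C + c1 D)) = 0 →
    T4 (B - A) (C - A) (D - A) := by decide

def R4 (p q r p' q' r' : ZMod 3) : Prop :=
  T4 (p * 1 + p' * 1) (q * 1 + q' * 1) (r * 1 + r' * 1) ∧
  T4 (p * 1 + p' * 2) (q * 1 + q' * 2) (r * 1 + r' * 2)

instance (p q r p' q' r' : ZMod 3) : Decidable (R4 p q r p' q' r') := by
  unfold R4; infer_instance

lemma pigeon : ∀ p q r : ZMod 3, p = 0 ∨ q = 0 ∨ r = 0 ∨ p = q ∨ p = r ∨ q = r := by decide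

set_option synthInstance.maxSize 2000 in
set_option synthInstance.maxHeartbeats 1000000 in
set_option maxHeartbeats 4000000 in
lemma loop4 : ∀ p q r : ZMod 3, ¬(p = 0 ∧ q = 0 ∧ r = 0) → R4 p q r p q r →
    (p = 0 ∧ ∀ p' q' r', R4 p q r p' q' r' → p' = 0) ∨
    (q = 0 ∧ ∀ p' q' r', R4 p q r p' q' r' → q' = 0) ∨
    (r = 0 ∧ ∀ p' q' r', R4 p q r p' q' r' → r' = 0) ∨
    (p = q ∧ ∀ p' q' r', R4 p q r p' q' r' → p' = q') ∨
    (p = r ∧ ∀ p' q' r', R4 p q r p' q' r' → p' = r') ∨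
    (q = r ∧ ∀ p' q' r', R4 p q r p' q' r' → q' = r') := by decide

set_option synthInstance.maxSize 2000 in
set_option synthInstance.maxHeartbeats 1000000 in
set_option maxHeartbeats 4000000 in
lemma tri4 : ∀ p1 q1 r1 p2 q2 r2 : ZMod 3, R4 p1 q1 r1 p2 q2 r2 →
    ¬(p1 = 0 ∧ q1 = 0 ∧ r1 = 0) → ¬(p2 = 0 ∧ q2 = 0 ∧ r2 = 0) →
    ¬(p1 = p2 ∧ q1 = q2 ∧ r1 = r2) →
    ∀ p3 q3 r3, R4 p1 q1 r1 p3 q3 r3 → R4 p2 q2 r2 p3 q3 r3 →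
      ((p3 = 0 ∧ q3 = 0 ∧ r3 = 0) ∨ (p3 = p1 ∧ q3 = q1 ∧ r3 = r1) ∨
        (p3 = p2 ∧ q3 = q2 ∧ r3 = r2)) := by decide

set_option synthInstance.maxSize 2000 in
set_option synthInstance.maxHeartbeats 1000000 in
set_option maxHeartbeats 4000000 in
lemma edge4 : ∀ p1 q1 r1 p2 q2 r2 : ZMod 3,
    ¬(p1 = 0 ∧ q1 = 0 ∧ r1 = 0) → ¬(p2 = 0 ∧ q2 = 0 ∧ r2 = 0) →
    ¬(p1 = p2 ∧ q1 = q2 ∧ r1 = r2) → R4 p1 q1 r1 p2 q2 r2 →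
    R4 p1 q1 r1 0 0 0 → R4 p2 q2 r2 0 0 0 →
    (p1 = 0 ∧ p2 = 0) ∨ (q1 = 0 ∧ q2 = 0) ∨ (r1 = 0 ∧ r2 = 0) ∨
    (p1 = q1 ∧ p2 = q2) ∨ (p1 = r1 ∧ p2 = r2) ∨ (q1 = r1 ∧ q2 = r2) := by decide

/-! ### The three-point core -/

lemma core3 {m : ℕ} (hm : 3 ≤ m) (u v : Fin m → ZMod 3)
    (hT : ∀ k l : Fin m, k ≠ l → ∀ x y : ZMod 3, x ≠ 0 → y ≠ 0 →
      T3 (u k * x + u l * y) (v k * x + v l * y)) : False := by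
  have h01 : (⟨0, by omega⟩ : Fin m) ≠ ⟨1, by omega⟩ := by simp [Fin.ext_iff]
  have h02 : (⟨0, by omega⟩ : Fin m) ≠ ⟨2, by omega⟩ := by simp [Fin.ext_iff]
  have h12 : (⟨1, by omega⟩ : Fin m) ≠ ⟨2, by omega⟩ := by simp [Fin.ext_iff]
  exact key3 _ _ _ _ _ _
    (hT _ _ h01 1 1 (by decide) (by decide)) (hT _ _ h01 1 2 (by decide) (by decide))
    (hT _ _ h02 1 1 (by decide) (by decide)) (hT _ _ h02 1 2 (by decide) (by decide))
    (hT _ _ h12 1 1 (by decide) (by decide)) (hT _ _ h12 1 2 (by decide) (by decide))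

/-! ### The four-point core -/

lemma core4 {m : ℕ} (hm : 3 ≤ m) (p q r : Fin m → ZMod 3)
    (hR : ∀ k l : Fin m, k ≠ l → R4 (p k) (q k) (r k) (p l) (q l) (r l)) :
    (∀ k, p k = 0) ∨ (∀ k, q k = 0) ∨ (∀ k, r k = 0) ∨
    (∀ k, p k = q k) ∨ (∀ k, p k = r k) ∨ (∀ k, q k = r k) := by
  by_cases hA : ∃ i j : Fin m, i ≠ j ∧ p i = p j ∧ q i = q j ∧ r i = r j ∧
      ¬(p i = 0 ∧ q i = 0 ∧ r i = 0)
  · obtain ⟨i, j, hij, hpe, hqe, hre, hnz⟩ := hA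
    have hself : R4 (p i) (q i) (r i) (p i) (q i) (r i) := by
      have h := hR i j hij
      rw [← hpe, ← hqe, ← hre] at h
      exact h
    have hN : ∀ k, k ≠ i → R4 (p i) (q i) (r i) (p k) (q k) (r k) :=
      fun k hk => hR i k (Ne.symm hk)
    rcases loop4 _ _ _ hnz hself with
      ⟨h1, h2⟩ | ⟨h1, h2⟩ | ⟨h1, h2⟩ | ⟨h1, h2⟩ | ⟨h1, h2⟩ | ⟨h1, h2⟩
    · refine Or.inl fun k => ?_
      by_cases hk : k = i
      · rw [hk]; exact h1
      · exact h2 _ _ _ (hN k hk)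
    · refine Or.inr (Or.inl fun k => ?_)
      by_cases hk : k = i
      · rw [hk]; exact h1
      · exact h2 _ _ _ (hN k hk)
    · refine Or.inr (Or.inr (Or.inl fun k => ?_))
      by_cases hk : k = i
      · rw [hk]; exact h1
      · exact h2 _ _ _ (hN k hk)
    · refine Or.inr (Or.inr (Or.inr (Or.inl fun k => ?_)))
      by_cases hk : k = i
      · rw [hk]; exact h1
      · exact h2 _ _ _ (hN k hk)
    · refine Or.inr (Or.inr (Or.inr (Or.inr (Or.inl fun k => ?_))))
      by_cases hk : k = i
      · rw [hk]; exact h1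
      · exact h2 _ _ _ (hN k hk)
    · refine Or.inr (Or.inr (Or.inr (Or.inr (Or.inr fun k => ?_))))
      by_cases hk : k = i
      · rw [hk]; exact h1
      · exact h2 _ _ _ (hN k hk)
  · push_neg at hA
    by_cases hC : ∃ i j l : Fin m, i ≠ j ∧ i ≠ l ∧ j ≠ l ∧
        ¬(p i = 0 ∧ q i = 0 ∧ r i = 0) ∧ ¬(p j = 0 ∧ q j = 0 ∧ r j = 0) ∧
        ¬(p l = 0 ∧ q l = 0 ∧ r l = 0)
    · exfalso
      obtain ⟨i, j, l, hij, hil, hjl, nzi, nzj, nzl⟩ := hC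
      have hne12 : ¬(p i = p j ∧ q i = q j ∧ r i = r j) :=
        fun h => nzi (hA i j hij h.1 h.2.1 h.2.2)
      rcases tri4 _ _ _ _ _ _ (hR i j hij) nzi nzj hne12 _ _ _
        (hR i l hil) (hR j l hjl) with h | h | h
      · exact nzl h
      · exact nzl (hA l i (Ne.symm hil) h.1 h.2.1 h.2.2)
      · exact nzl (hA l j (Ne.symm hjl) h.1 h.2.1 h.2.2)
    · by_cases hE : ∃ i j : Fin m, i ≠ j ∧ ¬(p i = 0 ∧ q i = 0 ∧ r i = 0) ∧
          ¬(p j = 0 ∧ q j = 0 ∧ r j = 0)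
      · obtain ⟨i, j, hij, nzi, nzj⟩ := hE
        have hz : ∀ k, k ≠ i → k ≠ j → (p k = 0 ∧ q k = 0 ∧ r k = 0) := by
          intro k hki hkj
          by_contra hk
          exact hC ⟨i, j, k, hij, Ne.symm hki, Ne.symm hkj, nzi, nzj, hk⟩
        have hl : ∃ l : Fin m, l ≠ i ∧ l ≠ j := by
          by_contra h
          push_neg at h
          have hsub : (Finset.univ : Finset (Fin m)) ⊆ {i, j} := by
            intro l _
            simp only [Finset.mem_insert, Finset.mem_singleton]
            by_cases hli : l = i
            · exact Or.inl hli
            · exact Or.inr (h l hli)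
          have h1 := Finset.card_le_card hsub
          have h2 : ({i, j} : Finset (Fin m)).card ≤ 2 :=
            le_trans (Finset.card_insert_le _ _) (by simp)
          rw [Finset.card_univ, Fintype.card_fin] at h1
          omega
        obtain ⟨l, hli, hlj⟩ := hl
        obtain ⟨hz1, hz2, hz3⟩ := hz l hli hlj
        have hRi0 : R4 (p i) (q i) (r i) 0 0 0 := by
          have h := hR i l (Ne.symm hli)
          rw [hz1, hz2, hz3] at h
          exact h
        have hRj0 : R4 (p j) (q j) (r j) 0 0 0 := by
          have h := hR j l (Ne.symm hlj)
          rw [hz1, hz2, hz3] at h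
          exact h
        have hne12 : ¬(p i = p j ∧ q i = q j ∧ r i = r j) :=
          fun h => nzi (hA i j hij h.1 h.2.1 h.2.2)
        rcases edge4 _ _ _ _ _ _ nzi nzj hne12 (hR i j hij) hRi0 hRj0 with
          ⟨h1, h2⟩ | ⟨h1, h2⟩ | ⟨h1, h2⟩ | ⟨h1, h2⟩ | ⟨h1, h2⟩ | ⟨h1, h2⟩
        · refine Or.inl fun k => ?_
          by_cases hki : k = i
          · rw [hki]; exact h1
          by_cases hkj : k = j
          · rw [hkj]; exact h2
          exact (hz k hki hkj).1
        · refine Or.inr (Or.inl fun k => ?_)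
          by_cases hki : k = i
          · rw [hki]; exact h1
          by_cases hkj : k = j
          · rw [hkj]; exact h2
          exact (hz k hki hkj).2.1
        · refine Or.inr (Or.inr (Or.inl fun k => ?_))
          by_cases hki : k = i
          · rw [hki]; exact h1
          by_cases hkj : k = j
          · rw [hkj]; exact h2
          exact (hz k hki hkj).2.2
        · refine Or.inr (Or.inr (Or.inr (Or.inl fun k => ?_)))
          by_cases hki : k = i
          · rw [hki]; exact h1
          by_cases hkj : k = j
          · rw [hkj]; exact h2
          rw [(hz k hki hkj).1, (hz k hki hkj).2.1]
        · refine Or.inr (Or.inr (Or.inr (Or.inr (Or.inl fun k => ?_))))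
          by_cases hki : k = i
          · rw [hki]; exact h1
          by_cases hkj : k = j
          · rw [hkj]; exact h2
          rw [(hz k hki hkj).1, (hz k hki hkj).2.2]
        · refine Or.inr (Or.inr (Or.inr (Or.inr (Or.inr fun k => ?_))))
          by_cases hki : k = i
          · rw [hki]; exact h1
          by_cases hkj : k = j
          · rw [hkj]; exact h2
          rw [(hz k hki hkj).2.1, (hz k hki hkj).2.2]
      · push_neg at hE
        by_cases hG : ∃ i, ¬(p i = 0 ∧ q i = 0 ∧ r i = 0)
        · obtain ⟨i, nzi⟩ := hG
          have hz : ∀ k, k ≠ i → (p k = 0 ∧ q k = 0 ∧ r k = 0) :=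
            fun k hk => hE i k (Ne.symm hk) (fun a b c => nzi ⟨a, b, c⟩)
          rcases pigeon (p i) (q i) (r i) with h | h | h | h | h | h
          · refine Or.inl fun k => ?_
            by_cases hk : k = i
            · rw [hk]; exact h
            · exact (hz k hk).1
          · refine Or.inr (Or.inl fun k => ?_)
            by_cases hk : k = i
            · rw [hk]; exact h
            · exact (hz k hk).2.1
          · refine Or.inr (Or.inr (Or.inl fun k => ?_))
            by_cases hk : k = i
            · rw [hk]; exact h
            · exact (hz k hk).2.2
          · refine Or.inr (Or.inr (Or.inr (Or.inl fun k => ?_)))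
            by_cases hk : k = i
            · rw [hk]; exact h
            · rw [(hz k hk).1, (hz k hk).2.1]
          · refine Or.inr (Or.inr (Or.inr (Or.inr (Or.inl fun k => ?_))))
            by_cases hk : k = i
            · rw [hk]; exact h
            · rw [(hz k hk).1, (hz k hk).2.2]
          · refine Or.inr (Or.inr (Or.inr (Or.inr (Or.inr fun k => ?_))))
            by_cases hk : k = i
            · rw [hk]; exact h
            · rw [(hz k hk).2.1, (hz k hk).2.2]
        · push_neg at hG
          exact Or.inl fun k => (hG k).1

/-- for `m ≥ 3`, `BiD(m,2,2)^⊥ = A(m, {0,…,m} \\ {2})` has no nonzero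
codeword of Hamming weight at most 4; its minimum distance is at least 5. -/
theorem stmt_12 (m : ℕ) (hm : 3 ≤ m) (α : F4) (hα : α ^ 2 = α + 1)
    (f : (Fin m → ZMod 3) → ZMod 2)
    (hf : f ∈ code m α {n | n ≤ m ∧ n ≠ 2}) (hne : f ≠ 0) :
    5 ≤ hammingNorm f := by
  simp only [code, Set.mem_setOf_eq] at hf
  by_contra hcon
  push_neg at hcon
  set T : Finset (Fin m → ZMod 3) := Finset.univ.filter fun i => f i ≠ 0 with hT
  have hTcard : hammingNorm f = T.card := rfl
  rw [hTcard] at hcon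
  have key : ∀ k l : Fin m, k ≠ l → ∀ x y : ZMod 3, x ≠ 0 → y ≠ 0 →
      (∑ i ∈ T, c0 (i k * x + i l * y)) = 0 ∧ (∑ i ∈ T, c1 (i k * x + i l * y)) = 0 := by
    intro k l hkl x y hx hy
    set j : Fin m → ZMod 3 := fun t => if t = k then x else if t = l then y else 0 with hj
    have hwt : hammingNorm j = 2 := by
      show (Finset.univ.filter fun t => j t ≠ 0).card = 2
      have hfil : (Finset.univ.filter fun t => j t ≠ 0) = {k, l} := by
        ext t
        simp only [Finset.mem_filter, Finset.mem_univ, true_and, Finset.mem_insert,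
          Finset.mem_singleton, hj]
        by_cases h1 : t = k
        · simp [h1, hx]
        · by_cases h2 : t = l
          · simp [h1, h2, hy, Ne.symm hkl]
          · simp [h1, h2]
      rw [hfil, Finset.card_insert_of_notMem (by simp [hkl]), Finset.card_singleton]
    have hdz : dft α f j = 0 := hf j (by rw [hwt]; simp)
    have hred : dft α f j = ∑ i ∈ T, α ^ (dotp i j).val := by
      have h1 : dft α f j = ∑ i ∈ T, toF4 (f i) * α ^ (dotp i j).val := by
        unfold dft
        symm
        apply Finset.sum_subset (Finset.subset_univ T)
        intro i _ hi
        have h0 : f i = 0 := by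
          by_contra h
          exact hi (Finset.mem_filter.mpr ⟨Finset.mem_univ i, h⟩)
        rw [h0, map_zero, zero_mul]
      rw [h1]
      refine Finset.sum_congr rfl fun i hi => ?_
      rw [zmod2_eq_one _ (Finset.mem_filter.mp hi).2, map_one, one_mul]
    rw [hred] at hdz
    have hsum := sums_zero α hα T (fun i => dotp i j) hdz
    have hdot : ∀ i : Fin m → ZMod 3, dotp i j = i k * x + i l * y := by
      intro i
      have h2 : ∑ t, i t * j t = ∑ t ∈ ({k, l} : Finset (Fin m)), i t * j t := by
        symm
        apply Finset.sum_subset (Finset.subset_univ _)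
        intro t _ ht
        simp only [Finset.mem_insert, Finset.mem_singleton] at ht
        push_neg at ht
        simp [hj, ht.1, ht.2]
      unfold dotp
      rw [h2, Finset.sum_pair hkl]
      simp [hj, Ne.symm hkl]
    simp only [hdot] at hsum
    exact hsum
  have hne' : T.Nonempty := by
    obtain ⟨i0, hi0⟩ := Function.ne_iff.mp hne
    simp only [Pi.zero_apply] at hi0
    exact ⟨i0, Finset.mem_filter.mpr ⟨Finset.mem_univ i0, hi0⟩⟩
  have hcard : T.card = 1 ∨ T.card = 2 ∨ T.card = 3 ∨ T.card = 4 := by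
    have := Finset.card_pos.mpr hne'
    omega
  have h01 : (⟨0, by omega⟩ : Fin m) ≠ ⟨1, by omega⟩ := by simp [Fin.ext_iff]
  rcases hcard with hc | hc | hc | hc
  · obtain ⟨e, hTe⟩ := Finset.card_eq_one.mp hc
    have hk1 := key _ _ h01 1 1 (by decide) (by decide)
    rw [hTe, Finset.sum_singleton, Finset.sum_singleton] at hk1
    exact case1 _ hk1
  · obtain ⟨u, v, huv, hTe⟩ := Finset.card_eq_two.mp hc
    obtain ⟨K, hK⟩ := Function.ne_iff.mp huv
    have hLex : ∃ L : Fin m, K ≠ L := by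
      by_cases h : K = ⟨0, by omega⟩
      · exact ⟨⟨1, by omega⟩, by rw [h]; exact h01⟩
      · exact ⟨⟨0, by omega⟩, h⟩
    obtain ⟨L, hKL⟩ := hLex
    have hu' : u ∉ ({v} : Finset _) := by simp [huv]
    have get : ∀ x y : ZMod 3, x ≠ 0 → y ≠ 0 →
        u K * x + u L * y = v K * x + v L * y := by
      intro x y hx hy
      obtain ⟨h0, h1⟩ := key K L hKL x y hx hy
      rw [hTe, Finset.sum_insert hu', Finset.sum_singleton] at h0 h1
      exact eq2 _ _ h0 h1
    exact hK (sub2 _ _ _ _ (get 1 1 (by decide) (by decide)) (get 1 2 (by decide) (by decide)))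
  · obtain ⟨u, v, w, huv, huw, hvw, hTe⟩ := Finset.card_eq_three.mp hc
    have hu' : u ∉ ({v, w} : Finset _) := by simp [huv, huw]
    have hv' : v ∉ ({w} : Finset _) := by simp [hvw]
    apply core3 hm (fun k => v k - u k) (fun k => w k - u k)
    intro k l hkl x y hx hy
    obtain ⟨h0, h1⟩ := key k l hkl x y hx hy
    rw [hTe, Finset.sum_insert hu', Finset.sum_insert hv', Finset.sum_singleton] at h0 h1
    have h2 := trans3 _ _ _ h0 h1
    have e : ∀ s t u' v' : ZMod 3,
        (s * x + t * y) - (u' * x + v' * y) = (s - u') * x + (t - v') * y :=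
      fun s t u' v' => by ring
    rw [e, e] at h2
    exact h2
  · obtain ⟨a, haT⟩ := hne'
    have hc3 : (T.erase a).card = 3 := by rw [Finset.card_erase_of_mem haT, hc]
    obtain ⟨b, c, d, hbc, hbd, hcd, herase⟩ := Finset.card_eq_three.mp hc3
    have hbmem : b ∈ T.erase a := by rw [herase]; simp
    have hcmem : c ∈ T.erase a := by rw [herase]; simp
    have hdmem : d ∈ T.erase a := by rw [herase]; simp
    have hab : a ≠ b := (Finset.ne_of_mem_erase hbmem).symm
    have hac : a ≠ c := (Finset.ne_of_mem_erase hcmem).symm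
    have had : a ≠ d := (Finset.ne_of_mem_erase hdmem).symm
    have hTe : T = insert a {b, c, d} := by rw [← herase, Finset.insert_erase haT]
    have ha' : a ∉ ({b, c, d} : Finset _) := by simp [hab, hac, had]
    have hb' : b ∉ ({c, d} : Finset _) := by simp [hbc, hbd]
    have hc' : c ∉ ({d} : Finset _) := by simp [hcd]
    have hTrans : ∀ k l : Fin m, k ≠ l → ∀ x y : ZMod 3, x ≠ 0 → y ≠ 0 →
        T4 ((b k - a k) * x + (b l - a l) * y) ((c k - a k) * x + (c l - a l) * y)
          ((d k - a k) * x + (d l - a l) * y) := by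
      intro k l hkl x y hx hy
      obtain ⟨h0, h1⟩ := key k l hkl x y hx hy
      rw [hTe, Finset.sum_insert ha', Finset.sum_insert hb', Finset.sum_insert hc',
        Finset.sum_singleton] at h0 h1
      have h2 := trans4 _ _ _ _ h0 h1
      have e : ∀ s t u' v' : ZMod 3,
          (s * x + t * y) - (u' * x + v' * y) = (s - u') * x + (t - v') * y :=
        fun s t u' v' => by ring
      rw [e, e, e] at h2
      exact h2
    rcases core4 hm (fun k => b k - a k) (fun k => c k - a k) (fun k => d k - a k)
      (fun k l hkl => ⟨hTrans k l hkl 1 1 (by decide) (by decide),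
        hTrans k l hkl 1 2 (by decide) (by decide)⟩) with h | h | h | h | h | h
    · exact hab (funext fun k => (sub_eq_zero.mp (h k)).symm)
    · exact hac (funext fun k => (sub_eq_zero.mp (h k)).symm)
    · exact had (funext fun k => (sub_eq_zero.mp (h k)).symm)
    · exact hbc (funext fun k => sub_left_inj.mp (h k))
    · exact hbd (funext fun k => sub_left_inj.mp (h k))
    · exact hcd (funext fun k => sub_left_inj.mp (h k))
end

section
/- The polynomial f = 1 + X_1X_2X_3 + X_1X_2²X_3² + X_1²X_2X_3² + X_1²X_2²X_3 is a codeword of weight 5 in A(3, {0,1,3}); that is, f(α^{j_1},α^{j_2},α^{j_3}) = 0 for all j ∈ (Z/3)³ with wt(j) = 2. Consequently the minimum distance of BiD^⊥(3,2,2) is exactly 5. -/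
/-!
For `c, d ∈ {1, 2}` the points `c e_x + d e_y` (`x ≠ y`) are exactly the weight-two frequencies.
Since `α + α² = 1` in characteristic 2, `∑_{c ∈ {1,2}} α^(c t)` is the indicator of `t ≠ 0`;
multiplying two such sums inverts the transform on these frequencies, so every box
`{i | i x ≠ a ∧ i y ≠ b}` meets the support of a codeword in an even number of points.
That condition is invariant under translation, so a codeword of weight at most 4 may be assumed
to contain `0` in its support, and the at most three remaining support points are excluded by a
finite check. For `f`, the five exponents `⟨i, j⟩`, `i ∈ supp f`, are `0, 0, 0, 1, 2` for every
`j` of weight two, and `1 + 1 + 1 + α + α² = 0`.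
-/

open Finset

theorem Finset.add_sum_ne_zero_of_card_le_three {ι M : Type*} [LinearOrder ι] [AddCommMonoid M]
    {v : ι → M} {c : M} {U : Finset ι} (hU : U.card ≤ 3) (h0 : c ≠ 0)
    (h1 : ∀ a ∈ U, c + v a ≠ 0)
    (h2 : ∀ a ∈ U, ∀ b ∈ U, a < b → c + v a + v b ≠ 0)
    (h3 : ∀ a ∈ U, ∀ b ∈ U, ∀ d ∈ U, a < b → b < d → c + v a + v b + v d ≠ 0) :
    c + ∑ i ∈ U, v i ≠ 0 := by
  obtain ⟨k, hk⟩ : ∃ k, U.card = k := ⟨_, rfl⟩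
  set f := U.orderEmbOfFin hk
  have hsum : ∑ i ∈ U, v i = ∑ j, v (f j) := by
    rw [← map_orderEmbOfFin_univ U hk, sum_map]
    rfl
  have hf : ∀ j, f j ∈ U := orderEmbOfFin_mem U hk
  have hmono := f.strictMono
  rw [hsum]
  obtain rfl | rfl | rfl | rfl : k = 0 ∨ k = 1 ∨ k = 2 ∨ k = 3 := by omega
  · simpa using h0
  · simpa using h1 _ (hf 0)
  · simpa [Fin.sum_univ_two, add_assoc] using h2 _ (hf 0) _ (hf 1) (hmono (by decide))
  · simpa [Fin.sum_univ_three, add_assoc] using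
      h3 _ (hf 0) _ (hf 1) _ (hf 2) (hmono (by decide)) (hmono (by decide))

theorem ZMod.sum_filter_ne_zero_eq_sum_smul {ι M : Type*} [Fintype ι] [AddCommMonoid M]
    [Module (ZMod 2) M] (g : ι → ZMod 2) (x : ι → M) :
    ∑ i with g i ≠ 0, x i = ∑ i, g i • x i := by
  rw [sum_filter]
  refine sum_congr rfl fun i _ => ?_
  obtain h | h : g i = 0 ∨ g i = 1 := by generalize g i = a; decide +revert
  all_goals simp [h]

section Character

variable {α : F4}

theorem pow_three_eq_one_of_sq_eq_add_one (hα : α ^ 2 = α + 1) : α ^ 3 = 1 := by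
  linear_combination (α + 1) * hα + α * (CharTwo.two_eq_zero : (2 : F4) = 0)

theorem pow_val_add (hα : α ^ 2 = α + 1) (x y : ZMod 3) :
    α ^ (x + y).val = α ^ x.val * α ^ y.val := by
  rw [ZMod.val_add, ← pow_add, ← pow_eq_pow_mod _ (pow_three_eq_one_of_sq_eq_add_one hα)]

theorem sum_pow_val_mul (hα : α ^ 2 = α + 1) (t : ZMod 3) :
    ∑ c ∈ ({1, 2} : Finset (ZMod 3)), α ^ (c * t).val = if t = 0 then 0 else 1 := by
  have h2 : (2 : F4) = 0 := CharTwo.two_eq_zero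
  rw [sum_pair (by decide)]
  fin_cases t
  · show α ^ 0 + α ^ 0 = 0
    linear_combination h2
  · show α ^ 1 + α ^ 2 = 1
    linear_combination hα + α * h2
  · show α ^ 2 + α ^ 1 = 1
    linear_combination hα + α * h2

theorem ite_ne_and_ne_eq_sum (hα : α ^ 2 = α + 1) (u v a b : ZMod 3) :
    (if u ≠ a ∧ v ≠ b then 1 else 0 : F4) =
      ∑ c ∈ ({1, 2} : Finset (ZMod 3)), ∑ d ∈ ({1, 2} : Finset (ZMod 3)),
        α ^ (-(c * a + d * b)).val * α ^ (u * c + v * d).val := by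
  calc (if u ≠ a ∧ v ≠ b then 1 else 0 : F4)
      = (∑ c ∈ ({1, 2} : Finset (ZMod 3)), α ^ (c * (u - a)).val) *
          ∑ d ∈ ({1, 2} : Finset (ZMod 3)), α ^ (d * (v - b)).val := by
        simp only [sum_pow_val_mul hα, sub_eq_zero, ite_and, ne_eq, ite_not]
        split_ifs <;> simp
    _ = _ := by
        rw [sum_mul_sum]
        refine sum_congr rfl fun c _ => sum_congr rfl fun d _ => ?_
        rw [← pow_val_add hα, ← pow_val_add hα]
        ring_nf

end Character

def pairVec (k : Fin 3) (c d : ZMod 3) : Fin 3 → ZMod 3 := Pi.single (k + 1) c + Pi.single (k + 2) d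

theorem hammingNorm_pairVec : ∀ (k : Fin 3) (c d : ZMod 3), c ≠ 0 → d ≠ 0 →
    hammingNorm (pairVec k c d) = 2 := by
  decide

theorem dotp_pairVec (i : Fin 3 → ZMod 3) (k : Fin 3) (c d : ZMod 3) :
    dotp i (pairVec k c d) = i (k + 1) * c + i (k + 2) * d := by
  fin_cases k <;> simp [dotp, pairVec, Fin.sum_univ_three, Pi.single_apply, add_comm]

-- The column of `i` in the incidence matrix of boxes against points; as `k` runs through
-- `Fin 3`, `{k + 1, k + 2}` runs through all pairs of coordinates.
def boxCol (i : Fin 3 → ZMod 3) (r : Fin 3 × ZMod 3 × ZMod 3) : ZMod 2 :=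
  if i (r.1 + 1) ≠ r.2.1 ∧ i (r.1 + 2) ≠ r.2.2 then 1 else 0

theorem sum_smul_boxCol_eq_zero {α : F4} (hα : α ^ 2 = α + 1)
    {g : (Fin 3 → ZMod 3) → ZMod 2} (hg : ∀ j, hammingNorm j = 2 → dft α g j = 0) :
    ∑ i, g i • boxCol i = 0 := by
  ext ⟨k, a, b⟩
  rw [Finset.sum_apply, Pi.zero_apply]
  apply toF4.injective
  have hdft : ∀ c ∈ ({1, 2} : Finset (ZMod 3)), ∀ d ∈ ({1, 2} : Finset (ZMod 3)),
      dft α g (pairVec k c d) = 0 := by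
    have hne : ∀ c ∈ ({1, 2} : Finset (ZMod 3)), c ≠ 0 := by decide
    exact fun c hc d hd => hg _ (hammingNorm_pairVec k c d (hne c hc) (hne d hd))
  calc toF4 (∑ i, (g i • boxCol i) (k, a, b))
      = ∑ c ∈ ({1, 2} : Finset (ZMod 3)), ∑ d ∈ ({1, 2} : Finset (ZMod 3)),
          α ^ (-(c * a + d * b)).val * dft α g (pairVec k c d) := by
        simp only [dft, dotp_pairVec, mul_sum, map_sum]
        refine (sum_congr rfl fun i _ => ?_).trans
          (by rw [sum_comm]; exact sum_congr rfl fun c _ => sum_comm)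
        rw [Pi.smul_apply, smul_eq_mul, map_mul, boxCol, apply_ite toF4, map_one, map_zero,
          ite_ne_and_ne_eq_sum hα, mul_sum]
        simp only [mul_sum]
        exact sum_congr rfl fun c _ => sum_congr rfl fun d _ => by ring
    _ = 0 := sum_eq_zero fun c hc => sum_eq_zero fun d hd => by rw [hdft c hc d hd, mul_zero]
    _ = toF4 0 := (map_zero toF4).symm

theorem boxCol_sub (i t : Fin 3 → ZMod 3) (r : Fin 3 × ZMod 3 × ZMod 3) :
    boxCol (i - t) r = boxCol i (r.1, r.2.1 + t (r.1 + 1), r.2.2 + t (r.1 + 2)) := by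
  simp only [boxCol, Pi.sub_apply, ne_eq, sub_eq_iff_eq_add]

def pointOfIndex (n : ℕ) : Fin 3 → ZMod 3 := fun k => ((n / 3 ^ (k : ℕ) : ℕ) : ZMod 3)

def indexOfPoint (i : Fin 3 → ZMod 3) : ℕ := ∑ k, (i k).val * 3 ^ (k : ℕ)

theorem pointOfIndex_indexOfPoint : ∀ i, pointOfIndex (indexOfPoint i) = i := by
  decide

theorem indexOfPoint_lt : ∀ i, indexOfPoint i < 27 := by
  decide

set_option synthInstance.maxSize 100000 in
theorem boxCol_zero_add_sum_ne_zero :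
    boxCol 0 ≠ 0 ∧
    (∀ a < 27, 0 < a → boxCol 0 + boxCol (pointOfIndex a) ≠ 0) ∧
    (∀ b < 27, ∀ a < b, 0 < a →
      boxCol 0 + boxCol (pointOfIndex a) + boxCol (pointOfIndex b) ≠ 0) ∧
    (∀ d < 27, ∀ b < d, ∀ a < b, 0 < a →
      boxCol 0 + boxCol (pointOfIndex a) + boxCol (pointOfIndex b) + boxCol (pointOfIndex d) ≠ 0) := by
  decide +kernel

theorem five_le_card_of_zero_mem {T : Finset (Fin 3 → ZMod 3)} (h0 : 0 ∈ T)
    (hT : ∑ i ∈ T, boxCol i = 0) : 5 ≤ T.card := by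
  by_contra! hcard
  let idx : (Fin 3 → ZMod 3) ↪ ℕ :=
    ⟨indexOfPoint, Function.LeftInverse.injective pointOfIndex_indexOfPoint⟩
  set V := (T.erase 0).map idx
  have hV : V.card ≤ 3 := by rw [card_map, card_erase_of_mem h0]; omega
  have hsum : ∑ i ∈ T.erase 0, boxCol i = ∑ n ∈ V, boxCol (pointOfIndex n) := by
    rw [sum_map]
    exact sum_congr rfl fun i _ => by rw [Function.Embedding.coeFn_mk, pointOfIndex_indexOfPoint]
  have hrange : ∀ n ∈ V, 0 < n ∧ n < 27 := by
    simp only [V, mem_map, mem_erase]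
    rintro _ ⟨i, ⟨hi, -⟩, rfl⟩
    refine ⟨Nat.pos_of_ne_zero fun h => hi ?_, indexOfPoint_lt i⟩
    have h' : indexOfPoint i = 0 := h
    rw [← pointOfIndex_indexOfPoint i, h']
    ext k
    simp [pointOfIndex]
  obtain ⟨h₀, h₁, h₂, h₃⟩ := boxCol_zero_add_sum_ne_zero
  refine add_sum_ne_zero_of_card_le_three hV h₀
    (fun a ha => h₁ a (hrange a ha).2 (hrange a ha).1)
    (fun a ha b hb hab => h₂ b (hrange b hb).2 a hab (hrange a ha).1)
    (fun a ha b hb d hd hab hbd => h₃ d (hrange d hd).2 b hbd a hab (hrange a ha).1) ?_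
  rw [← hsum, add_sum_erase T _ h0, hT]

theorem five_le_card_of_sum_boxCol_eq_zero {S : Finset (Fin 3 → ZMod 3)} (hS : S.Nonempty)
    (h : ∑ i ∈ S, boxCol i = 0) : 5 ≤ S.card := by
  obtain ⟨p, hp⟩ := hS
  rw [← card_map (Equiv.subRight p).toEmbedding]
  refine five_le_card_of_zero_mem (mem_map.2 ⟨p, hp, sub_self p⟩) ?_
  ext r
  have hr := congrFun h (r.1, r.2.1 + p (r.1 + 1), r.2.2 + p (r.1 + 2))
  rw [Finset.sum_apply, Pi.zero_apply] at hr
  rw [sum_map, Finset.sum_apply, Pi.zero_apply, ← hr]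
  exact sum_congr rfl fun i _ => boxCol_sub i p r

theorem five_le_hammingNorm_of_dft_eq_zero {α : F4} (hα : α ^ 2 = α + 1)
    {g : (Fin 3 → ZMod 3) → ZMod 2} (hg : ∀ j, hammingNorm j = 2 → dft α g j = 0)
    (hne : g ≠ 0) : 5 ≤ hammingNorm g := by
  refine five_le_card_of_sum_boxCol_eq_zero ?_ ?_
  · obtain ⟨i, hi⟩ := Function.ne_iff.mp hne
    exact ⟨i, mem_filter.2 ⟨mem_univ i, hi⟩⟩
  · rw [ZMod.sum_filter_ne_zero_eq_sum_smul, sum_smul_boxCol_eq_zero hα hg]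

def codewordSupport : Finset (Fin 3 → ZMod 3) :=
  {![0, 0, 0], ![1, 1, 1], ![1, 2, 2], ![2, 1, 2], ![2, 2, 1]}

theorem map_dotp_codewordSupport : ∀ j : Fin 3 → ZMod 3, hammingNorm j = 2 →
    codewordSupport.val.map (dotp · j) = {0, 0, 0, 1, 2} := by
  decide

theorem dft_codewordSupport_eq_zero {α : F4} (hα : α ^ 2 = α + 1) {j : Fin 3 → ZMod 3}
    (hj : hammingNorm j = 2) :
    dft α (fun i => if i ∈ codewordSupport then 1 else 0) j = 0 := by
  have h2 : (2 : F4) = 0 := CharTwo.two_eq_zero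
  calc dft α (fun i => if i ∈ codewordSupport then 1 else 0) j
      = ∑ i ∈ codewordSupport, α ^ (dotp i j).val := by
        simp [dft, apply_ite toF4, sum_ite_mem]
    _ = ((codewordSupport.val.map (dotp · j)).map (fun t => α ^ t.val)).sum := by
        rw [Multiset.map_map, sum_eq_multiset_sum]; rfl
    _ = 0 := by
        rw [map_dotp_codewordSupport j hj]
        show α ^ 0 + (α ^ 0 + (α ^ 0 + (α ^ 1 + (α ^ 2 + 0)))) = 0
        linear_combination hα + (α + 2) * h2

/-- `f = 1 + X₁X₂X₃ + X₁X₂²X₃² + X₁²X₂X₃² + X₁²X₂²X₃` is a weight-5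
codeword of `A(3,{0,1,3})`, and the minimum distance of `BiD^⊥(3,2,2)` is exactly 5. -/
theorem stmt_13 (α : F4) (hα : α ^ 2 = α + 1)
    (f : (Fin 3 → ZMod 3) → ZMod 2)
    (hfdef : f = fun i =>
      if i = ![0, 0, 0] ∨ i = ![1, 1, 1] ∨ i = ![1, 2, 2] ∨
          i = ![2, 1, 2] ∨ i = ![2, 2, 1] then 1 else 0) :
    hammingNorm f = 5 ∧
    (∀ j : Fin 3 → ZMod 3, hammingNorm j = 2 → dft α f j = 0) ∧
    (∀ g ∈ code 3 α {n | n ≤ 3 ∧ n ≠ 2}, g ≠ 0 → 5 ≤ hammingNorm g) := by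
  have hf : f = fun i => if i ∈ codewordSupport then 1 else 0 := by
    simp [hfdef, codewordSupport]
  subst hf
  refine ⟨by decide, fun j hj => dft_codewordSupport_eq_zero hα hj, fun g hg hne => ?_⟩
  refine five_le_hammingNorm_of_dft_eq_zero hα (fun j hj => hg j ?_) hne
  simp [hj]
end

section
/- For m ≥ 2, the polynomial f = (X_1 + X_1²)(1 + X_2···X_m + X_2²···X_m²) has Hamming weight 6 and satisfies f(α^{j_1},...,α^{j_m}) = 0 for every j ∈ (Z/3)^m with wt(j) = 2; hence f is a weight-6 codeword of BiD^⊥(m,2,2). -/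
open Finset

/-- for `m ≥ 2`, `f = (X₁ + X₁²)(1 + X₂⋯Xₘ + X₂²⋯Xₘ²)` has Hamming
weight 6 and vanishes at every evaluation point indexed by `j` of Hamming weight 2,
i.e. it is a weight-6 codeword of `BiD^⊥(m,2,2)`. -/
theorem stmt_14 (m : ℕ) (hm : 2 ≤ m) (α : F4) (hα : α ^ 2 = α + 1)
    (f : (Fin m → ZMod 3) → ZMod 2)
    (hfdef : f = fun i =>
      if i ⟨0, by omega⟩ ≠ 0 ∧
          (∀ ℓ : Fin m, ℓ ≠ ⟨0, by omega⟩ → i ℓ = i ⟨1, by omega⟩) then 1 else 0) :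
    hammingNorm f = 6 ∧
    (∀ j : Fin m → ZMod 3, hammingNorm j = 2 → dft α f j = 0) := by
  have h2 : (1:F4) + 1 = 0 := by
    have := CharP.cast_eq_zero F4 2
    push_cast at this
    linear_combination this
  have h3 : α ^ 3 = 1 := by linear_combination (α+1)*hα + α*h2
  have key : ∀ x y : ZMod 3, α ^ (x+y).val = α ^ x.val * α ^ y.val := fun x y => by
    rw [ZMod.val_add, ← pow_eq_pow_mod _ h3, pow_add]
  set e0 : Fin m := ⟨0, by omega⟩ with he0
  set e1 : Fin m := ⟨1, by omega⟩ with he1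
  have he01 : e1 ≠ e0 := by simp [he0, he1, Fin.ext_iff]
  set g : ZMod 3 × ZMod 3 → (Fin m → ZMod 3) :=
    fun p ℓ => if ℓ = e0 then p.1 else p.2 with hg
  set s : Finset (ZMod 3 × ZMod 3) := ({1,2} : Finset (ZMod 3)) ×ˢ univ with hs
  have hginj : Function.Injective g := by
    intro p q h
    have h1 := congrFun h e0
    have h2 := congrFun h e1
    simp [hg, he01] at h1 h2
    exact Prod.ext h1 h2
  have hfP : ∀ i, f i ≠ 0 ↔ (i e0 ≠ 0 ∧ ∀ ℓ : Fin m, ℓ ≠ e0 → i ℓ = i e1) := by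
    intro i
    rw [hfdef]
    by_cases h : i e0 ≠ 0 ∧ ∀ ℓ : Fin m, ℓ ≠ e0 → i ℓ = i e1 <;> simp [h]
  have hne3 : ∀ a : ZMod 3, a ≠ 0 → a = 1 ∨ a = 2 := by decide
  have hsupp : ({i | f i ≠ 0} : Finset _) = s.image g := by
    ext i
    simp only [mem_filter, mem_univ, true_and, mem_image, hfP]
    constructor
    · rintro ⟨h0, hrest⟩
      refine ⟨(i e0, i e1), ?_, ?_⟩
      · simp only [hs, mem_product, mem_univ, and_true, mem_insert, mem_singleton]
        exact hne3 _ h0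
      · funext ℓ
        by_cases hℓ : ℓ = e0 <;> simp [hg, hℓ, hrest ℓ]
    · rintro ⟨⟨a, c⟩, hmem, rfl⟩
      simp only [hs, mem_product, mem_insert, mem_singleton] at hmem
      refine ⟨?_, fun ℓ hℓ => ?_⟩
      · simp only [hg, if_pos rfl]
        rcases hmem.1 with rfl | rfl <;> decide
      · simp [hg, hℓ, he01]
  constructor
  · rw [hammingNorm, hsupp, card_image_of_injective _ hginj]
    decide
  · intro j hj
    set t := j e0 with ht
    set S : ZMod 3 := ∑ l ∈ univ.erase e0, j l with hS
    have hdot : ∀ p : ZMod 3 × ZMod 3, dotp (g p) j = p.1 * t + p.2 * S := by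
      rintro ⟨a, c⟩
      rw [dotp, ← Finset.add_sum_erase _ _ (mem_univ e0)]
      simp only [hg, if_pos rfl]
      congr 1
      rw [hS, mul_sum]
      exact Finset.sum_congr rfl fun l hl => by
        rw [if_neg (Finset.ne_of_mem_erase hl)]
    have hone : ∀ z : ZMod 2, z ≠ 0 → z = 1 := by decide
    have hdft : dft α f j =
        (∑ a ∈ ({1,2} : Finset (ZMod 3)), α ^ (a * t).val) *
        (∑ c : ZMod 3, α ^ (c * S).val) := by
      rw [dft]
      rw [Finset.sum_congr rfl (fun i _ => show toF4 (f i) * α ^ (dotp i j).val =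
            if f i ≠ 0 then α ^ (dotp i j).val else 0 by
          by_cases h : f i = 0
          · simp [h]
          · rw [if_pos h, hone _ h, map_one, one_mul]),
        ← Finset.sum_filter, show (univ.filter (f · ≠ 0)) = ({i | f i ≠ 0} : Finset _) from rfl,
        hsupp, Finset.sum_image (fun p _ q _ h => hginj h)]
      rw [Finset.sum_congr rfl (fun p _ => by rw [hdot p, key])]
      rw [hs, Finset.sum_product, Finset.sum_mul_sum]
    rw [hdft]
    by_cases h0 : t = 0
    · have : (∑ a ∈ ({1,2} : Finset (ZMod 3)), α ^ (a * t).val) = 0 := by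
        rw [h0]
        rw [Finset.sum_insert (by decide), Finset.sum_singleton]
        norm_num
        linear_combination h2
      rw [this, zero_mul]
    · -- S ≠ 0
      have hScard : (({l | j l ≠ 0} : Finset _).erase e0).card = 1 := by
        rw [Finset.card_erase_of_mem]
        · rw [show ({l | j l ≠ 0} : Finset _).card = hammingNorm j from rfl, hj]
        · simp only [mem_filter, mem_univ, true_and]; exact h0
      obtain ⟨ℓ, hℓ⟩ := Finset.card_eq_one.mp hScard
      have hℓmem : ℓ ∈ ({l | j l ≠ 0} : Finset _).erase e0 := hℓ ▸ Finset.mem_singleton_self ℓ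
      have hSval : S = j ℓ := by
        rw [hS, ← Finset.sum_filter_ne_zero]
        have : (univ.erase e0).filter (j · ≠ 0) = ({l | j l ≠ 0} : Finset _).erase e0 := by
          ext l
          simp only [mem_filter, mem_erase, mem_univ, true_and]
          tauto
        rw [this, hℓ, Finset.sum_singleton]
      have hSne : S ≠ 0 := by
        rw [hSval]
        exact (Finset.mem_erase.mp hℓmem).2 |> fun h => by
          simpa using (Finset.mem_filter.mp ((Finset.mem_erase.mp hℓmem).2)).2
      have hB : (∑ c : ZMod 3, α ^ (c * S).val) = 0 := by
        have huniv : (univ : Finset (ZMod 3)) = {0, 1, 2} := by decide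
        rw [huniv, Finset.sum_insert (by decide), Finset.sum_insert (by decide),
          Finset.sum_singleton]
        rcases hne3 S hSne with h1 | h1 <;> rw [h1] <;> norm_num <;>
          simp only [show (ZMod.val (1:ZMod 3)) = 1 from rfl,
            show (ZMod.val (2:ZMod 3)) = 2 from rfl,
            show (ZMod.val (4:ZMod 3)) = 1 from rfl] <;>
          linear_combination hα + (1+α)*h2
      rw [hB, mul_zero]
end
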